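/- arXiv:0903.0632 — 6 statements merged into one kernel-verified Lean document; each statement's English description precedes it below -/
import Mathlib

section
/- For all real α with α > -1/2, one has (1/2 + α)·log(1 + 2α) - α ≤ 2α², with equality if and only if α = 0. -/
/-- For all `α > -1/2`, `(1/2 + α) * log (1 + 2α) - α ≤ 2α^2`,
with equality if and only if `α = 0`. -/
theorem log_inequality_two_alpha_sq (α : ℝ) (hα : -(1 / 2) < α) :
    (1 / 2 + α) * Real.log (1 + 2 * α) - α ≤ 2 * α ^ 2 ∧
      ((1 / 2 + α) * Real.log (1 + 2 * α) - α = 2 * α ^ 2 ↔ α = 0) := by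
  have hx : (0 : ℝ) < 1 + 2 * α := by linarith
  have hle : Real.log (1 + 2 * α) ≤ (1 + 2 * α) - 1 :=
    Real.log_le_sub_one_of_pos hx
  have hpos : (0 : ℝ) < 1 / 2 + α := by linarith
  constructor
  · nlinarith [mul_le_mul_of_nonneg_left hle hpos.le]
  · constructor
    · intro heq
      by_contra hne
      have hx1 : (1 + 2 * α) ≠ 1 := by
        intro h; apply hne; linarith
      have hlt : Real.log (1 + 2 * α) < (1 + 2 * α) - 1 :=
        Real.log_lt_sub_one_of_pos hx hx1
      nlinarith [mul_lt_mul_of_pos_left hlt hpos]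
    · intro h
      subst h
      norm_num
end

section
/- Let u = (u_1,...,u_N) be uniformly distributed on the unit sphere of R^N, and let s_1,...,s_N be nonnegative real numbers (independent of u) with s_k ≤ B almost surely for all k. Let s̄ = N^{-1}∑_k s_k. Then for every t > 0, Pr{∑_{k=1}^N s_k u_k² ≥ s̄ + t} ≤ exp(-N t² / (4B(B+t))). -/
open MeasureTheory

/-- The uniform (normalized Haar) probability measure on the unit sphere of `ℝ^N`. -/
noncomputable def sphereUniform (N : ℕ) :
    Measure (Metric.sphere (0 : EuclideanSpace ℝ (Fin N)) 1) :=
  ((volume : Measure (EuclideanSpace ℝ (Fin N))).toSphere Set.univ)⁻¹ •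
    (volume : Measure (EuclideanSpace ℝ (Fin N))).toSphere

/-!
Represent the uniform point of the sphere as `g / ‖g‖` for a standard Gaussian vector `g`: the
Gaussian density is radial, so in polar coordinates its angular part is the normalized sphere
measure. The event `c ≤ ∑ s_k u_k²` is then the cone `0 ≤ ∑ x_k g_k²` with `x_k = b (s_k - c) / B`,
and the exponential Markov inequality with `E exp (x g² / 2) = (1 - x)^(-1/2)` bounds its
probability by `∏ (1 - x_k)^(-1/2)`. For `|x| ≤ b < 1` one has
`-log (1 - x) ≤ x + x² / (2 (1 - b))`; with `∑ x_k = -b N t / B` and the choice `b = t / (B + t)`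
this is the claimed bound.
-/

open Real Metric Set ProbabilityTheory
open scoped ENNReal

lemma neg_log_one_sub_le {x b : ℝ} (hb : b < 1) (hx : |x| ≤ b) :
    -log (1 - x) ≤ x + x ^ 2 / (2 * (1 - b)) := by
  obtain ⟨hbx, hxb⟩ := abs_le.1 hx
  rcases le_total x 0 with hx0 | hx0
  · have hlog := le_log_one_add_of_nonneg (neg_nonneg.2 hx0)
    have hrat : -x - x ^ 2 / 2 ≤ 2 * -x / (-x + 2) := by
      rw [le_div_iff₀ (by linarith)]
      nlinarith [mul_nonneg (sq_nonneg x) (neg_nonneg.2 hx0)]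
    have hsq : x ^ 2 / 2 ≤ x ^ 2 / (2 * (1 - b)) :=
      div_le_div_of_nonneg_left (sq_nonneg x) (by linarith) (by linarith)
    rw [← sub_eq_add_neg] at hlog
    linarith
  · -- `1 / (1 - x) = (1 + y) / (1 - y)` for `y = x / (2 - x)`, and the `artanh` series bounds apply
    have h2x : 2 - x ≠ 0 := by linarith
    have h1x : 1 - x ≠ 0 := by linarith
    set y := x / (2 - x) with hy
    have h := log_div_le_sum_range_add (div_nonneg hx0 (by linarith))
      (show y < 1 by rw [hy, div_lt_one (by linarith)]; linarith) 1
    have hratio : (1 + y) / (1 - y) = (1 - x)⁻¹ := by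
      have h1y : 1 - y = 2 * (1 - x) / (2 - x) := by rw [hy]; field_simp; ring
      rw [h1y, hy]; field_simp; ring
    have hrhs : ∑ i ∈ Finset.range 1, y ^ (2 * i + 1) / (2 * i + 1) + y ^ (2 * 1 + 1) / (1 - y ^ 2)
        = (x + x ^ 2 / (2 * (1 - x))) / 2 := by
      have : (2 - x) ^ 2 - x ^ 2 ≠ 0 := by nlinarith
      rw [hy]
      simp only [Finset.sum_range_one, mul_zero, zero_add, pow_one, CharP.cast_eq_zero, div_one,
        mul_one, Nat.reduceAdd]
      field_simp
      ring
    rw [hratio, log_inv, hrhs] at h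
    have hsq : x ^ 2 / (2 * (1 - x)) ≤ x ^ 2 / (2 * (1 - b)) :=
      div_le_div_of_nonneg_left (sq_nonneg x) (by linarith) (by linarith)
    linarith

lemma inv_sqrt_one_sub_le_exp {x b : ℝ} (hb : b < 1) (hx : |x| ≤ b) :
    (√(1 - x))⁻¹ ≤ exp (x / 2 + x ^ 2 / (4 * (1 - b))) := by
  have hx1 : 0 < 1 - x := by linarith [le_abs_self x]
  rw [← exp_log hx1, ← exp_half, ← exp_neg]
  gcongr
  have hlog := neg_log_one_sub_le hb hx
  have hhalf : x ^ 2 / (4 * (1 - b)) = x ^ 2 / (2 * (1 - b)) / 2 := by rw [div_div]; ring_nf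
  linarith

lemma prod_inv_sqrt_one_sub_le_exp {ι : Type*} [Fintype ι] {x : ι → ℝ} {b : ℝ} (hb : b < 1)
    (hx : ∀ i, |x i| ≤ b) :
    ∏ i, (√(1 - x i))⁻¹ ≤ exp ((∑ i, x i) / 2 + Fintype.card ι * (b ^ 2 / (4 * (1 - b)))) := by
  have hb1 : 0 < 4 * (1 - b) := by linarith
  calc ∏ i, (√(1 - x i))⁻¹ ≤ ∏ i, exp (x i / 2 + x i ^ 2 / (4 * (1 - b))) :=
        Finset.prod_le_prod (fun i _ => by positivity) fun i _ => inv_sqrt_one_sub_le_exp hb (hx i)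
    _ = exp ((∑ i, x i) / 2 + ∑ i, x i ^ 2 / (4 * (1 - b))) := by
        rw [← exp_sum, Finset.sum_add_distrib, Finset.sum_div]
    _ ≤ exp ((∑ i, x i) / 2 + Fintype.card ι * (b ^ 2 / (4 * (1 - b)))) := by
        gcongr
        rw [← nsmul_eq_mul, ← Finset.card_univ, ← Finset.sum_const]
        exact Finset.sum_le_sum fun i _ => div_le_div_of_nonneg_right
          (sq_le_sq' (abs_le.1 (hx i)).1 (abs_le.1 (hx i)).2) hb1.le

lemma gaussianPDFReal_mul_exp_sq (θ y : ℝ) :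
    gaussianPDFReal 0 1 y * exp (θ * y ^ 2 / 2) = (√(2 * π))⁻¹ * exp (-((1 - θ) / 2) * y ^ 2) := by
  rw [gaussianPDFReal, mul_assoc, ← exp_add]
  simp only [NNReal.coe_one, mul_one, sub_zero]
  ring_nf

lemma integrable_gaussianPDFReal_mul_exp_sq {θ : ℝ} (hθ : θ < 1) :
    Integrable fun y => gaussianPDFReal 0 1 y * exp (θ * y ^ 2 / 2) := by
  simp_rw [gaussianPDFReal_mul_exp_sq]
  exact (integrable_exp_neg_mul_sq (by linarith)).const_mul _

lemma integral_gaussianPDFReal_mul_exp_sq {θ : ℝ} (hθ : θ < 1) :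
    ∫ y, gaussianPDFReal 0 1 y * exp (θ * y ^ 2 / 2) = (√(1 - θ))⁻¹ := by
  simp_rw [gaussianPDFReal_mul_exp_sq, integral_const_mul, integral_gaussian]
  rw [← sqrt_inv, ← sqrt_inv, ← sqrt_mul (by positivity)]
  congr 1
  have : 1 - θ ≠ 0 := by linarith
  field_simp

lemma lintegral_euclideanSpace_ofReal_prod {ι : Type*} [Fintype ι] {f : ι → ℝ → ℝ}
    (hf : ∀ i, Integrable (f i)) (hf0 : ∀ i y, 0 ≤ f i y) :
    ∫⁻ x : EuclideanSpace ℝ ι, ENNReal.ofReal (∏ i, f i (x i))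
      = ENNReal.ofReal (∏ i, ∫ y, f i y) := by
  calc ∫⁻ x : EuclideanSpace ℝ ι, ENNReal.ofReal (∏ i, f i (x i))
      = ∫⁻ y : ι → ℝ, ENNReal.ofReal (∏ i, f i (y i)) :=
        (EuclideanSpace.volume_preserving_symm_measurableEquiv_toLp ι).lintegral_comp_emb
          (MeasurableEquiv.measurableEmbedding _) fun y => ENNReal.ofReal (∏ i, f i (y i))
    _ = ENNReal.ofReal (∏ i, ∫ y, f i y) := by
      rw [← integral_fintype_prod_eq_prod, ofReal_integral_eq_lintegral_ofReal
        (Integrable.fintype_prod hf) (.of_forall fun y => Finset.prod_nonneg fun i _ => hf0 i (y i)),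
        volume_pi]

noncomputable def gaussianRadialDensity (n : ℕ) (r : ℝ) : ℝ :=
  (√(2 * π))⁻¹ ^ n * exp (-r ^ 2 / 2)

@[fun_prop]
lemma measurable_gaussianRadialDensity (n : ℕ) : Measurable (gaussianRadialDensity n) := by
  unfold gaussianRadialDensity
  fun_prop

lemma gaussianRadialDensity_nonneg (n : ℕ) (r : ℝ) : 0 ≤ gaussianRadialDensity n r := by
  unfold gaussianRadialDensity
  positivity

lemma prod_gaussianPDFReal_eq {ι : Type*} [Fintype ι] (x : EuclideanSpace ℝ ι) :
    ∏ i, gaussianPDFReal 0 1 (x i) = gaussianRadialDensity (Fintype.card ι) ‖x‖ := by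
  simp [gaussianPDFReal, gaussianRadialDensity, Finset.prod_mul_distrib, ← exp_sum,
    EuclideanSpace.real_norm_sq_eq, Finset.sum_div, neg_div]

lemma lintegral_gaussianRadialDensity_mul_exp {ι : Type*} [Fintype ι] {θ : ι → ℝ}
    (hθ : ∀ i, θ i < 1) :
    ∫⁻ x : EuclideanSpace ℝ ι, ENNReal.ofReal
        (gaussianRadialDensity (Fintype.card ι) ‖x‖ * exp ((∑ i, θ i * x i ^ 2) / 2))
      = ENNReal.ofReal (∏ i, (√(1 - θ i))⁻¹) := by
  have hprod (x : EuclideanSpace ℝ ι) :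
      gaussianRadialDensity (Fintype.card ι) ‖x‖ * exp ((∑ i, θ i * x i ^ 2) / 2)
        = ∏ i, gaussianPDFReal 0 1 (x i) * exp (θ i * x i ^ 2 / 2) := by
    rw [Finset.prod_mul_distrib, prod_gaussianPDFReal_eq, Finset.sum_div, exp_sum]
  simp_rw [hprod]
  rw [lintegral_euclideanSpace_ofReal_prod (fun i => integrable_gaussianPDFReal_mul_exp_sq (hθ i))
    fun i y => mul_nonneg (gaussianPDFReal_nonneg _ _ _) (exp_pos _).le]
  simp_rw [integral_gaussianPDFReal_mul_exp_sq (hθ _)]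

section Polar

variable {E : Type*} [NormedAddCommGroup E] [NormedSpace ℝ E]

/-- The open cone `{r • u | 0 < r, u ∈ S}`, written through the polar homeomorphism so that
`measurePreserving_homeomorphUnitSphereProd` computes its measure. -/
def sphereCone (S : Set (sphere (0 : E) 1)) : Set E :=
  (↑) '' (homeomorphUnitSphereProd E ⁻¹' (S ×ˢ univ))

lemma sphereCone_univ : sphereCone (univ : Set (sphere (0 : E) 1)) = {0}ᶜ := by
  ext; simp [sphereCone]

lemma exists_smul_of_mem_sphereCone {S : Set (sphere (0 : E) 1)} {x : E} (hx : x ∈ sphereCone S) :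
    ∃ u ∈ S, ∃ r : ℝ, x = r • (u : E) := by
  obtain ⟨y, hy, rfl⟩ := hx
  refine ⟨_, hy.1, ‖(y : E)‖, ?_⟩
  have : (y : E) ≠ 0 := y.2
  simp [smul_smul, this]

variable [MeasurableSpace E] [BorelSpace E] [FiniteDimensional ℝ E] (μ : Measure E)
  [μ.IsAddHaarMeasure]

lemma setLIntegral_sphereCone_norm {g : ℝ → ℝ≥0∞} (hg : Measurable g)
    {S : Set (sphere (0 : E) 1)} (hS : MeasurableSet S) :
    ∫⁻ x in sphereCone S, g ‖x‖ ∂μ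
      = μ.toSphere S * ∫⁻ r, g r ∂(Measure.volumeIoiPow (Module.finrank ℝ E - 1)) := by
  rw [sphereCone, ← setLIntegral_subtype (measurableSet_singleton 0).compl _ fun x => g ‖x‖]
  have hcong (y : ({0}ᶜ : Set E)) : g ‖(y : E)‖ = g (homeomorphUnitSphereProd E y).2 := by simp
  simp_rw [hcong]
  rw [← setLIntegral_map (hS.prod .univ) (f := fun p : sphere (0 : E) 1 × Ioi (0 : ℝ) => g p.2)
    (hg.comp (measurable_subtype_coe.comp measurable_snd)) (homeomorphUnitSphereProd E).measurable,
    (Measure.measurePreserving_homeomorphUnitSphereProd μ).map_eq,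
    ← Measure.prod_restrict, Measure.restrict_univ]
  simpa using lintegral_prod_mul (μ := μ.toSphere.restrict S)
    (ν := Measure.volumeIoiPow (Module.finrank ℝ E - 1)) (f := fun _ => 1)
    (g := fun r : Ioi (0 : ℝ) => g r) aemeasurable_const (hg.comp measurable_subtype_coe).aemeasurable

lemma toSphere_mul_lintegral_norm [Nontrivial E] {g : ℝ → ℝ≥0∞} (hg : Measurable g)
    {S : Set (sphere (0 : E) 1)} (hS : MeasurableSet S) :
    μ.toSphere S * ∫⁻ x, g ‖x‖ ∂μ = μ.toSphere univ * ∫⁻ x in sphereCone S, g ‖x‖ ∂μ := by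
  have hall : ∫⁻ x, g ‖x‖ ∂μ = ∫⁻ x in sphereCone univ, g ‖x‖ ∂μ := by
    rw [sphereCone_univ, restrict_compl_singleton]
  rw [hall, setLIntegral_sphereCone_norm μ hg hS, setLIntegral_sphereCone_norm μ hg .univ,
    mul_left_comm]

end Polar

lemma sphereUniform_eq_setLIntegral_sphereCone {N : ℕ} (hN : 0 < N) {g : ℝ → ℝ≥0∞}
    (hg : Measurable g) (hg1 : ∫⁻ x : EuclideanSpace ℝ (Fin N), g ‖x‖ = 1)
    {S : Set (sphere (0 : EuclideanSpace ℝ (Fin N)) 1)} (hS : MeasurableSet S) :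
    sphereUniform N S = ∫⁻ x in sphereCone S, g ‖x‖ := by
  have : Nonempty (Fin N) := ⟨⟨0, hN⟩⟩
  have hK0 : (volume : Measure (EuclideanSpace ℝ (Fin N))).toSphere univ ≠ 0 :=
    Measure.measure_univ_ne_zero.2 (Measure.toSphere_ne_zero _)
  have hKtop : (volume : Measure (EuclideanSpace ℝ (Fin N))).toSphere univ ≠ ⊤ := measure_ne_top _ _
  rw [sphereUniform, Measure.smul_apply, smul_eq_mul, ← mul_one (Measure.toSphere _ S), ← hg1,
    toSphere_mul_lintegral_norm volume hg hS, ← mul_assoc, ENNReal.inv_mul_cancel hK0 hKtop, one_mul]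

lemma sum_sq_eq_one_of_mem_sphere {ι : Type*} [Fintype ι] (u : sphere (0 : EuclideanSpace ℝ ι) 1) :
    ∑ i, (u : EuclideanSpace ℝ ι) i ^ 2 = 1 := by
  rw [← EuclideanSpace.real_norm_sq_eq, norm_eq_of_mem_sphere u, one_pow]

lemma sum_mul_sq_le_of_mem_sphere {ι : Type*} [Fintype ι] {s : ι → ℝ} {B : ℝ} (hsB : ∀ i, s i ≤ B)
    (u : sphere (0 : EuclideanSpace ℝ ι) 1) : ∑ i, s i * (u : EuclideanSpace ℝ ι) i ^ 2 ≤ B :=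
  calc ∑ i, s i * (u : EuclideanSpace ℝ ι) i ^ 2 ≤ ∑ i, B * (u : EuclideanSpace ℝ ι) i ^ 2 :=
        Finset.sum_le_sum fun i _ => mul_le_mul_of_nonneg_right (hsB i) (sq_nonneg _)
    _ = B := by rw [← Finset.mul_sum, sum_sq_eq_one_of_mem_sphere, mul_one]

lemma sum_sub_mul_sq_of_mem_sphere {ι : Type*} [Fintype ι] (s : ι → ℝ) (c : ℝ)
    (u : sphere (0 : EuclideanSpace ℝ ι) 1) :
    ∑ i, (s i - c) * (u : EuclideanSpace ℝ ι) i ^ 2 = ∑ i, s i * (u : EuclideanSpace ℝ ι) i ^ 2 - c := by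
  simp only [sub_mul, Finset.sum_sub_distrib, ← Finset.mul_sum, sum_sq_eq_one_of_mem_sphere, mul_one]

theorem sphereUniform_sum_mul_sq_nonneg_le {N : ℕ} (hN : 0 < N) {θ : Fin N → ℝ}
    (hθ : ∀ k, θ k < 1) :
    sphereUniform N {u | 0 ≤ ∑ k, θ k * (u : EuclideanSpace ℝ (Fin N)) k ^ 2}
      ≤ ENNReal.ofReal (∏ k, (√(1 - θ k))⁻¹) := by
  set Q : EuclideanSpace ℝ (Fin N) → ℝ := fun x => ∑ k, θ k * x k ^ 2 with hQ_def
  have hQ : Measurable Q := by fun_prop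
  have hS : MeasurableSet {u : sphere (0 : EuclideanSpace ℝ (Fin N)) 1 | 0 ≤ Q u} :=
    measurableSet_le measurable_const (hQ.comp measurable_subtype_coe)
  have hmass : ∫⁻ x : EuclideanSpace ℝ (Fin N), ENNReal.ofReal (gaussianRadialDensity N ‖x‖) = 1 := by
    simpa using lintegral_gaussianRadialDensity_mul_exp (θ := fun _ : Fin N => 0) fun _ => one_pos
  rw [sphereUniform_eq_setLIntegral_sphereCone hN (measurable_gaussianRadialDensity N).ennreal_ofReal
    hmass hS]
  calc _ ≤ ∫⁻ x in sphereCone {u | 0 ≤ Q u},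
          ENNReal.ofReal (gaussianRadialDensity N ‖x‖ * exp (Q x / 2)) := by
        refine setLIntegral_mono (by fun_prop) fun x hx => ENNReal.ofReal_le_ofReal
          (le_mul_of_one_le_right (gaussianRadialDensity_nonneg _ _) (one_le_exp (div_nonneg ?_ zero_le_two)))
        obtain ⟨u, hu, r, rfl⟩ := exists_smul_of_mem_sphereCone hx
        calc 0 ≤ r ^ 2 * Q u := mul_nonneg (sq_nonneg r) hu
          _ = Q (r • (u : EuclideanSpace ℝ (Fin N))) := by
            simp only [hQ_def, Finset.mul_sum, PiLp.smul_apply, smul_eq_mul]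
            exact Finset.sum_congr rfl fun k _ => by ring
    _ ≤ ∫⁻ x, ENNReal.ofReal (gaussianRadialDensity N ‖x‖ * exp (Q x / 2)) :=
        setLIntegral_le_lintegral _ _
    _ = ENNReal.ofReal (∏ k, (√(1 - θ k))⁻¹) := by
        simpa using lintegral_gaussianRadialDensity_mul_exp hθ

theorem sphereUniform_sum_mul_sq_ge_le {N : ℕ} (hN : 0 < N) {s : Fin N → ℝ} {c B b : ℝ}
    (hB : 0 < B) (hsc : ∀ k, |s k - c| ≤ B) (hb₀ : 0 ≤ b) (hb : b < 1) :
    sphereUniform N {u | c ≤ ∑ k, s k * (u : EuclideanSpace ℝ (Fin N)) k ^ 2}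
      ≤ ENNReal.ofReal (exp (b / B * (∑ k, s k - N * c) / 2 + N * (b ^ 2 / (4 * (1 - b))))) := by
  set x : Fin N → ℝ := fun k => b / B * (s k - c)
  have hx (k : Fin N) : |x k| ≤ b :=
    calc |x k| = b / B * |s k - c| := by rw [abs_mul, abs_of_nonneg (by positivity)]
      _ ≤ b / B * B := by gcongr; exact hsc k
      _ = b := div_mul_cancel₀ b hB.ne'
  have hsum : ∑ k, x k = b / B * (∑ k, s k - N * c) := by
    simp [x, ← Finset.mul_sum, Finset.sum_sub_distrib]
  have hsub : {u : sphere (0 : EuclideanSpace ℝ (Fin N)) 1 |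
        c ≤ ∑ k, s k * (u : EuclideanSpace ℝ (Fin N)) k ^ 2}
      ⊆ {u | 0 ≤ ∑ k, x k * (u : EuclideanSpace ℝ (Fin N)) k ^ 2} := fun u (hu : c ≤ _) => by
    rw [mem_ofPred_eq]
    simp only [x, mul_assoc, ← Finset.mul_sum, sum_sub_mul_sq_of_mem_sphere]
    exact mul_nonneg (by positivity) (sub_nonneg.2 hu)
  calc _ ≤ _ := measure_mono hsub
    _ ≤ ENNReal.ofReal (∏ k, (√(1 - x k))⁻¹) :=
        sphereUniform_sum_mul_sq_nonneg_le hN fun k => (le_abs_self _).trans_lt ((hx k).trans_lt hb)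
    _ ≤ _ := by
        simpa [hsum] using ENNReal.ofReal_le_ofReal (prod_inv_sqrt_one_sub_le_exp hb hx)

/-- For `u` uniform on the unit sphere of `ℝ^N` and `0 ≤ s_k ≤ B`,
with `s̄ = N⁻¹ ∑ s_k`, for every `t > 0`,
`Pr{∑ s_k u_k² ≥ s̄ + t} ≤ exp (-N t² / (4 B (B + t)))`. -/
theorem sphere_quadratic_upper_deviation (N : ℕ) (hN : 0 < N) (s : Fin N → ℝ) (B t : ℝ)
    (hs : ∀ k, 0 ≤ s k) (hsB : ∀ k, s k ≤ B) (ht : 0 < t) :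
    sphereUniform N
        {u | (1 / N : ℝ) * ∑ k, s k + t ≤
          ∑ k, s k * ((u : EuclideanSpace ℝ (Fin N)) k) ^ 2}
      ≤ ENNReal.ofReal (Real.exp (-(N * t ^ 2) / (4 * B * (B + t)))) := by
  set c := (1 / N : ℝ) * ∑ k, s k + t with hc_def
  have hc : 0 < c := by
    have := Finset.sum_nonneg fun k (_ : k ∈ Finset.univ) => hs k
    positivity
  rcases lt_or_ge B c with hBc | hcB
  · have hempty : {u : sphere (0 : EuclideanSpace ℝ (Fin N)) 1 |
        c ≤ ∑ k, s k * ((u : EuclideanSpace ℝ (Fin N)) k) ^ 2} = ∅ :=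
      eq_empty_of_forall_notMem fun u hu => hBc.not_ge (hu.trans (sum_mul_sq_le_of_mem_sphere hsB u))
    simp [hempty]
  have hB : 0 < B := hc.trans_le hcB
  have hb : t / (B + t) < 1 := (div_lt_one (by positivity)).2 (by linarith)
  refine (sphereUniform_sum_mul_sq_ge_le hN hB
    (fun k => abs_le.2 ⟨by linarith [hs k], by linarith [hsB k]⟩) (by positivity) hb).trans_eq ?_
  have h1b : 1 - t / (B + t) = B / (B + t) := by field_simp; ring
  have hNc : ∑ k, s k - N * c = -(N * t) := by
    rw [hc_def]
    field_simp
    ring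
  rw [h1b, hNc]
  congr 2
  field_simp
  ring
end

section
/- Let u be uniformly distributed on the unit sphere of R^N and let s_1,...,s_N be constants in [0, B]. Let s̄ = N^{-1}∑_k s_k. Then for every t > 0, Pr{∑_{k=1}^N s_k u_k² ≤ s̄ - t} ≤ exp(-N t² / (4B(B+t))). -/
/-!
Write `c = s̄ - t`. Since `∑ u_k² = 1`, the event is `{0 ≤ ∑ a (c - s k) u_k²}` for every `a > 0`.
For weights `a k < 1`, polar coordinates split the Gaussian integral of
`exp (-∑ (1 - a k) x_k² / 2)` into a spherical and a radial factor; on `{0 ≤ ∑ a k u_k²}` the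
integrand dominates the radial Gaussian weight `exp (-r² / 2)`, so the uniform measure of that set
is at most the ratio of the two Gaussian integrals, `∏ (1 - a k)^(-1/2)`. With
`a k = λ (c - s k)`, the estimate `log (1 + y) ≥ y - y² / (2D)` for `y ≥ D - 1` and the bound
`∑ (s k - c)² ≤ (B - 2c) ∑ s k + N c²` coming from `0 ≤ s k ≤ B` give the exponent
for `λ = t / (B (B + t))`.
-/

open MeasureTheory

open Set Metric Real
open scoped ENNReal

namespace MeasureTheory.Measure

variable {E : Type*} [NormedAddCommGroup E] [NormedSpace ℝ E] [FiniteDimensional ℝ E]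
  [MeasurableSpace E] [BorelSpace E] [Nontrivial E] (μ : Measure E) [μ.IsAddHaarMeasure]

theorem lintegral_eq_lintegral_toSphere_prod (f : E → ℝ≥0∞) :
    ∫⁻ x, f x ∂μ = ∫⁻ p : sphere (0 : E) 1 × Ioi (0 : ℝ), f ((p.2 : ℝ) • (p.1 : E))
      ∂μ.toSphere.prod (volumeIoiPow (Module.finrank ℝ E - 1)) := by
  conv_lhs => rw [← restrict_compl_singleton (μ := μ) 0,
    ← lintegral_subtype_comap (measurableSet_singleton 0).compl]
  rw [← μ.measurePreserving_homeomorphUnitSphereProd.lintegral_comp_emb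
      (Homeomorph.measurableEmbedding _)]
  refine lintegral_congr fun x => ?_
  rw [← homeomorphUnitSphereProd_symm_apply_coe, Homeomorph.symm_apply_apply]

theorem toSphere_mul_lintegral_volumeIoiPow_le {A : Set (sphere (0 : E) 1)}
    (hA : MeasurableSet A) {f : E → ℝ≥0∞} {φ : ℝ → ℝ≥0∞} (hφ : Measurable φ)
    (hφf : ∀ u ∈ A, ∀ r : ℝ, 0 < r → φ r ≤ f (r • (u : E))) :
    μ.toSphere A * ∫⁻ r : Ioi (0 : ℝ), φ r ∂volumeIoiPow (Module.finrank ℝ E - 1) ≤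
      ∫⁻ x, f x ∂μ := by
  rw [← lintegral_indicator_one hA, ← lintegral_prod_mul (by fun_prop) (by fun_prop),
    lintegral_eq_lintegral_toSphere_prod μ]
  refine lintegral_mono fun ⟨u, r⟩ => ?_
  by_cases hu : u ∈ A
  · simpa [hu] using hφf u hu r r.2
  · simp [hu]

theorem lintegral_fun_norm_addHaar {φ : ℝ → ℝ≥0∞} (hφ : Measurable φ) :
    ∫⁻ x, φ ‖x‖ ∂μ =
      μ.toSphere univ * ∫⁻ r : Ioi (0 : ℝ), φ r ∂volumeIoiPow (Module.finrank ℝ E - 1) := by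
  rw [← lintegral_one, ← lintegral_prod_mul (by fun_prop) (by fun_prop),
    lintegral_eq_lintegral_toSphere_prod μ]
  refine lintegral_congr fun ⟨u, r⟩ => ?_
  simp [norm_smul, abs_of_pos r.2.out]

theorem toSphere_div_toSphere_univ_le {A : Set (sphere (0 : E) 1)} (hA : MeasurableSet A)
    {f : E → ℝ≥0∞} {φ : ℝ → ℝ≥0∞} (hφ : Measurable φ)
    (hφf : ∀ u ∈ A, ∀ r : ℝ, 0 < r → φ r ≤ f (r • (u : E)))
    (hφ₀ : ∫⁻ x, φ ‖x‖ ∂μ ≠ 0) (hφ_top : ∫⁻ x, φ ‖x‖ ∂μ ≠ ∞) :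
    μ.toSphere A / μ.toSphere univ ≤ (∫⁻ x, f x ∂μ) / ∫⁻ x, φ ‖x‖ ∂μ := by
  rw [lintegral_fun_norm_addHaar μ hφ] at hφ₀ hφ_top ⊢
  have hI₀ := right_ne_zero_of_mul hφ₀
  have hI_top : ∫⁻ r : Ioi (0 : ℝ), φ r ∂volumeIoiPow (Module.finrank ℝ E - 1) ≠ ∞ :=
    fun h => hφ_top (ENNReal.mul_eq_top.2 (.inl ⟨left_ne_zero_of_mul hφ₀, h⟩))
  rw [← ENNReal.mul_div_mul_right _ _ hI₀ hI_top]
  exact ENNReal.div_le_div_right (toSphere_mul_lintegral_volumeIoiPow_le μ hA hφ hφf) _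

end MeasureTheory.Measure

namespace EuclideanSpace

variable {ι : Type*} [Fintype ι]

theorem integral_exp_neg_sum_mul_sq (b : ι → ℝ) :
    ∫ x : EuclideanSpace ℝ ι, exp (-∑ k, b k * x k ^ 2) = ∏ k, √(π / b k) := by
  rw [← (PiLp.volume_preserving_toLp ι).integral_comp
    (MeasurableEquiv.toLp 2 (ι → ℝ)).measurableEmbedding, volume_pi]
  simp only [← Finset.sum_neg_distrib, exp_sum, ← neg_mul]
  rw [integral_fintype_prod_eq_prod (fun k x => exp (-b k * x ^ 2))]
  simp only [integral_gaussian]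

theorem lintegral_exp_neg_sum_mul_sq {b : ι → ℝ} (hb : ∀ k, 0 < b k) :
    ∫⁻ x : EuclideanSpace ℝ ι, ENNReal.ofReal (exp (-∑ k, b k * x k ^ 2)) =
      ENNReal.ofReal (∏ k, √(π / b k)) := by
  have hpos : 0 < ∏ k, √(π / b k) := Finset.prod_pos fun k _ => by have := hb k; positivity
  have h := integral_eq_lintegral_of_nonneg_ae (μ := volume)
    (f := fun x : EuclideanSpace ℝ ι => exp (-∑ k, b k * x k ^ 2))
    (.of_forall fun x => (exp_pos _).le) (by fun_prop)
  rw [integral_exp_neg_sum_mul_sq] at h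
  rw [h, ENNReal.ofReal_toReal]
  intro htop
  rw [htop, ENNReal.toReal_top] at h
  exact hpos.ne' h

theorem lintegral_exp_neg_half_mul_norm_sq :
    ∫⁻ x : EuclideanSpace ℝ ι, ENNReal.ofReal (exp (-(1 / 2 * ‖x‖ ^ 2))) =
      ENNReal.ofReal (∏ _k : ι, √(2 * π)) := by
  simp_rw [real_norm_sq_eq, Finset.mul_sum, lintegral_exp_neg_sum_mul_sq fun _ => one_half_pos,
    one_div, div_inv_eq_mul, mul_comm π]

theorem lintegral_exp_neg_sum_mul_sq_div_gaussian {a : ι → ℝ} (ha : ∀ k, a k < 1) :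
    (∫⁻ x : EuclideanSpace ℝ ι, ENNReal.ofReal (exp (-∑ k, (1 - a k) / 2 * x k ^ 2))) /
        ∫⁻ x : EuclideanSpace ℝ ι, ENNReal.ofReal (exp (-(1 / 2 * ‖x‖ ^ 2))) =
      ENNReal.ofReal (exp (-(∑ k, log (1 - a k)) / 2)) := by
  have hb k : 0 < (1 - a k) / 2 := by linarith [ha k]
  have hfactor {y : ℝ} (hy : 0 < y) : √(π / (y / 2)) / √(2 * π) = exp (-log y / 2) := by
    rw [← Real.sqrt_div' _ (by positivity), show π / (y / 2) / (2 * π) = y⁻¹ by field_simp,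
      sqrt_eq_rpow, inv_rpow hy.le, ← rpow_neg hy.le, rpow_def_of_pos hy]
    ring_nf
  rw [lintegral_exp_neg_half_mul_norm_sq, lintegral_exp_neg_sum_mul_sq hb,
    ← ENNReal.ofReal_div_of_pos (by positivity), ← Finset.prod_div_distrib,
    ← Finset.sum_neg_distrib, Finset.sum_div, exp_sum]
  exact congrArg _ <| Finset.prod_congr rfl fun k _ => hfactor (by linarith [ha k])

theorem sum_sq_eq_one_of_mem_sphere (u : sphere (0 : EuclideanSpace ℝ ι) 1) :
    ∑ k, (u : EuclideanSpace ℝ ι) k ^ 2 = 1 := by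
  rw [← real_norm_sq_eq, norm_eq_of_mem_sphere, one_pow]

theorem sum_mul_sq_le_iff (u : sphere (0 : EuclideanSpace ℝ ι) 1) (s : ι → ℝ) {a : ℝ} (ha : 0 < a)
    (c : ℝ) :
    ∑ k, s k * (u : EuclideanSpace ℝ ι) k ^ 2 ≤ c ↔
      0 ≤ ∑ k, a * (c - s k) * (u : EuclideanSpace ℝ ι) k ^ 2 := by
  have hexpand : ∑ k, a * (c - s k) * (u : EuclideanSpace ℝ ι) k ^ 2 =
      a * (c * ∑ k, (u : EuclideanSpace ℝ ι) k ^ 2 -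
        ∑ k, s k * (u : EuclideanSpace ℝ ι) k ^ 2) := by
    simp only [Finset.mul_sum, ← Finset.sum_sub_distrib]
    exact Finset.sum_congr rfl fun k _ => by ring
  rw [hexpand, sum_sq_eq_one_of_mem_sphere, mul_one, mul_nonneg_iff_of_pos_left ha, sub_nonneg]

end EuclideanSpace

theorem sphereUniform_apply (N : ℕ) (A : Set (sphere (0 : EuclideanSpace ℝ (Fin N)) 1)) :
    sphereUniform N A =
      (volume : Measure (EuclideanSpace ℝ (Fin N))).toSphere A /
        (volume : Measure (EuclideanSpace ℝ (Fin N))).toSphere univ := by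
  rw [sphereUniform, Measure.smul_apply, smul_eq_mul, ENNReal.div_eq_inv_mul]

theorem sphereUniform_nonneg_sum_mul_sq_le {N : ℕ} (hN : 0 < N) {a : Fin N → ℝ}
    (ha : ∀ k, a k < 1) :
    sphereUniform N {u | 0 ≤ ∑ k, a k * (u : EuclideanSpace ℝ (Fin N)) k ^ 2} ≤
      ENNReal.ofReal (exp (-(∑ k, log (1 - a k)) / 2)) := by
  have : Nontrivial (EuclideanSpace ℝ (Fin N)) :=
    Module.nontrivial_of_finrank_pos (R := ℝ) (by rwa [finrank_euclideanSpace_fin])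
  rw [sphereUniform_apply]
  refine (volume.toSphere_div_toSphere_univ_le (measurableSet_le (by fun_prop) (by fun_prop))
    (f := fun x => ENNReal.ofReal (exp (-∑ k, (1 - a k) / 2 * x k ^ 2)))
    (φ := fun r => ENNReal.ofReal (exp (-(1 / 2 * r ^ 2)))) (by fun_prop)
    ?_ ?_ ?_).trans_eq ?_
  · intro u hu r _
    have hsplit : ∑ k, (1 - a k) / 2 * (r • (u : EuclideanSpace ℝ (Fin N))) k ^ 2 =
        r ^ 2 / 2 * (∑ k, (u : EuclideanSpace ℝ (Fin N)) k ^ 2 -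
          ∑ k, a k * (u : EuclideanSpace ℝ (Fin N)) k ^ 2) := by
      simp only [PiLp.smul_apply, smul_eq_mul, Finset.mul_sum, ← Finset.sum_sub_distrib]
      exact Finset.sum_congr rfl fun k _ => by ring
    have hq : 0 ≤ ∑ k, a k * (u : EuclideanSpace ℝ (Fin N)) k ^ 2 := hu
    rw [hsplit, EuclideanSpace.sum_sq_eq_one_of_mem_sphere]
    exact ENNReal.ofReal_le_ofReal (exp_le_exp.2 (by nlinarith [sq_nonneg r]))
  · rw [EuclideanSpace.lintegral_exp_neg_half_mul_norm_sq]
    exact (ENNReal.ofReal_pos.2 (by positivity)).ne'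
  · rw [EuclideanSpace.lintegral_exp_neg_half_mul_norm_sq]
    exact ENNReal.ofReal_ne_top
  · exact EuclideanSpace.lintegral_exp_neg_sum_mul_sq_div_gaussian ha

theorem Real.sub_sq_div_le_log_one_add {D y : ℝ} (hD₀ : 0 < D) (hD₁ : D ≤ 1) (hy : D - 1 ≤ y) :
    y - y ^ 2 / (2 * D) ≤ log (1 + y) := by
  let f x := log (1 + x) - (x - x ^ 2 / (2 * D))
  have hf : ∀ x, D - 1 ≤ x → HasDerivAt f (x * (x + 1 - D) / (D * (1 + x))) x := by
    intro x hx
    have hx₀ : 0 < 1 + x := by linarith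
    refine ((((hasDerivAt_id' x).const_add 1).log hx₀.ne').sub
      ((hasDerivAt_id' x).sub ((hasDerivAt_pow 2 x).div_const (2 * D)))).congr_deriv ?_
    field_simp
    ring
  -- `f` decreases on `[D - 1, 0]` and increases on `[0, ∞)`, so `f 0 = 0` is its minimum
  suffices f 0 ≤ f y by simpa [f] using this
  rcases le_total 0 y with hy₀ | hy₀
  · refine monotoneOn_of_hasDerivWithinAt_nonneg (convex_Icc 0 y)
      (fun x hx => (hf x (by linarith [hx.1])).continuousAt.continuousWithinAt)
      (fun x hx => (hf x (by linarith [(interior_subset hx).1])).hasDerivWithinAt) (fun x hx => ?_)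
      ⟨le_rfl, hy₀⟩ ⟨hy₀, le_rfl⟩ hy₀
    rw [interior_Icc] at hx
    have : 0 < 1 + x := by linarith [hx.1]
    exact div_nonneg (mul_nonneg hx.1.le (by linarith [hx.1])) (by positivity)
  · refine antitoneOn_of_hasDerivWithinAt_nonpos (convex_Icc y 0)
      (fun x hx => (hf x (by linarith [hx.1])).continuousAt.continuousWithinAt)
      (fun x hx => (hf x (by linarith [(interior_subset hx).1])).hasDerivWithinAt) (fun x hx => ?_)
      ⟨le_rfl, hy₀⟩ ⟨hy₀, le_rfl⟩ hy₀
    rw [interior_Icc] at hx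
    have : 0 < 1 + x := by linarith [hx.1]
    exact div_nonpos_of_nonpos_of_nonneg
      (mul_nonpos_of_nonpos_of_nonneg hx.2.le (by linarith [hx.1])) (by positivity)

theorem sum_sub_sq_le {ι : Type*} [Fintype ι] {s : ι → ℝ} {B : ℝ} (hs : ∀ k, 0 ≤ s k)
    (hsB : ∀ k, s k ≤ B) (c : ℝ) :
    ∑ k, (s k - c) ^ 2 ≤ (B - 2 * c) * ∑ k, s k + Fintype.card ι * c ^ 2 := by
  rw [Finset.mul_sum, ← nsmul_eq_mul, ← Finset.card_univ, ← Finset.sum_const,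
    ← Finset.sum_add_distrib]
  exact Finset.sum_le_sum fun k _ => by nlinarith [hs k, hsB k]

theorem div_mul_sub_sub_lt_one {B t m x : ℝ} (hmB : m ≤ B) (ht : 0 < t) (htm : t ≤ m)
    (hx : 0 ≤ x) : t / (B * (B + t)) * (m - t - x) < 1 := by
  rw [div_mul_eq_mul_div, div_lt_one (mul_pos (by linarith) (by linarith))]
  nlinarith

theorem card_mul_sq_div_le_sum_log {ι : Type*} [Fintype ι] {s : ι → ℝ} {B t m : ℝ}
    (hs : ∀ k, 0 ≤ s k) (hsB : ∀ k, s k ≤ B) (hm : ∑ k, s k = Fintype.card ι * m) (hmB : m ≤ B)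
    (ht : 0 < t) (htm : t ≤ m) :
    Fintype.card ι * t ^ 2 / (2 * B * (B + t)) ≤
      ∑ k, log (1 - t / (B * (B + t)) * (m - t - s k)) := by
  set n := (Fintype.card ι : ℝ)
  set K := B * (B + t)
  set a := t / K
  set c := m - t
  have hK : 0 < K := mul_pos (by linarith) (by linarith)
  have ha : 0 < a := div_pos ht hK
  have haK : a * K = t := div_mul_cancel₀ t hK.ne'
  set D := 1 - a * c
  have hD₀ : 0 < D := by nlinarith
  have hD₁ : D ≤ 1 := by nlinarith
  have hlog k : a * (s k - c) - (a * (s k - c)) ^ 2 / (2 * D) ≤ log (1 - a * (c - s k)) := by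
    rw [show 1 - a * (c - s k) = 1 + a * (s k - c) by ring]
    exact Real.sub_sq_div_le_log_one_add hD₀ hD₁ (by nlinarith [hs k])
  have hKD : (B - 2 * c) * m + c ^ 2 ≤ K * D := by
    have : K * D = K - t * c := by simp only [D]; linear_combination (-c) * haK
    simp only [this, K, c]
    nlinarith
  have hsq : ∑ k, (s k - c) ^ 2 ≤ n * (K * D) :=
    calc ∑ k, (s k - c) ^ 2 ≤ (B - 2 * c) * (n * m) + n * c ^ 2 := hm ▸ sum_sub_sq_le hs hsB c
      _ = n * ((B - 2 * c) * m + c ^ 2) := by ring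
      _ ≤ n * (K * D) := by gcongr
  -- `a K = t` makes the quadratic loss exactly half of the linear gain `a n t`
  calc n * t ^ 2 / (2 * B * (B + t)) = a * (n * m - n * c) - a ^ 2 * (n * (K * D)) / (2 * D) := by
        simp only [c, a, K]
        field_simp
        ring
    _ ≤ a * (∑ k, s k - n * c) - a ^ 2 * (∑ k, (s k - c) ^ 2) / (2 * D) := by rw [hm]; gcongr
    _ = ∑ k, (a * (s k - c) - (a * (s k - c)) ^ 2 / (2 * D)) := by
        rw [Finset.sum_sub_distrib, ← Finset.sum_div, ← Finset.mul_sum, Finset.sum_sub_distrib]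
        simp only [mul_pow, ← Finset.mul_sum, Finset.sum_const, Finset.card_univ, nsmul_eq_mul]
        rfl
    _ ≤ ∑ k, log (1 - a * (c - s k)) := Finset.sum_le_sum fun k _ => hlog k

/-- For `u` uniform on the unit sphere of `ℝ^N` and constants `0 ≤ s_k ≤ B`,
with `s̄ = N⁻¹ ∑ s_k`, for every `t > 0`,
`Pr{∑ s_k u_k² ≤ s̄ - t} ≤ exp (-N t² / (4 B (B + t)))`. -/
theorem sphere_quadratic_lower_deviation (N : ℕ) (hN : 0 < N) (s : Fin N → ℝ) (B t : ℝ)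
    (hs : ∀ k, 0 ≤ s k) (hsB : ∀ k, s k ≤ B) (ht : 0 < t) :
    sphereUniform N
        {u | ∑ k, s k * ((u : EuclideanSpace ℝ (Fin N)) k) ^ 2 ≤
          (1 / N : ℝ) * ∑ k, s k - t}
      ≤ ENNReal.ofReal (Real.exp (-(N * t ^ 2) / (4 * B * (B + t)))) := by
  set m := (1 / N : ℝ) * ∑ k, s k
  have hm : ∑ k, s k = N * m := by simp only [m]; field_simp
  have hmB : m ≤ B := by
    refine le_of_mul_le_mul_left (hm ▸ ?_) (Nat.cast_pos.2 hN)
    simpa using Finset.sum_le_sum fun k (_ : k ∈ Finset.univ) => hsB k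
  rcases lt_or_ge m t with hmt | htm
  · refine (measure_mono_null (fun u (hu : _ ≤ m - t) => ?_) measure_empty).trans_le zero_le
    have : 0 ≤ ∑ k, s k * (u : EuclideanSpace ℝ (Fin N)) k ^ 2 :=
      Finset.sum_nonneg fun k _ => mul_nonneg (hs k) (sq_nonneg _)
    exact absurd (this.trans hu) (by linarith)
  set a := t / (B * (B + t))
  have ha : 0 < a := div_pos ht (mul_pos (by linarith) (by linarith))
  calc _ = sphereUniform N
        {u | 0 ≤ ∑ k, a * (m - t - s k) * (u : EuclideanSpace ℝ (Fin N)) k ^ 2} := by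
        congr 1
        ext u
        exact EuclideanSpace.sum_mul_sq_le_iff u s ha (m - t)
    _ ≤ ENNReal.ofReal (exp (-(∑ k, log (1 - a * (m - t - s k))) / 2)) :=
        sphereUniform_nonneg_sum_mul_sq_le hN fun k => div_mul_sub_sub_lt_one hmB ht htm (hs k)
    _ ≤ _ := by
        have := card_mul_sq_div_le_sum_log hs hsB (by simpa using hm) hmB ht htm
        simp only [Fintype.card_fin] at this
        refine ENNReal.ofReal_le_ofReal (exp_le_exp.2 ?_)
        have hhalf : N * t ^ 2 / (4 * B * (B + t)) = N * t ^ 2 / (2 * B * (B + t)) / 2 := by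
          rw [div_div]; ring
        rw [neg_div, neg_div, hhalf]
        linarith
end

section
/- Let X be a real random variable with a distribution measure μ such that Pr{|X| ≥ t} ≤ 2·exp(-N t² / (4c(c+t))) for all t > 0, where c > 0 and N ≥ 1. Then for all real z with |z| < N/(16c), E[e^{zX}] ≤ √(32π)·√(c²z²/N)·exp(2c²z²/N) + 3·e^{|z|/√N} + 2·exp(-N/16). -/
/-!
Bound `e^{zX} ≤ e^{a|X|}` with `a = |z|` and write `E e^{a|X|} = 1 + ∫₀^∞ a e^{at} P(|X| ≥ t) dt`.
With `v = 4c²/N`, the exponent `at - Nt²/(4c(c+t))` of the integrand is at most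
`at - t²/(2v) = a²v/2 - (t - av)²/(2v)` for `t ≤ c`, and at most `-at` for `t ≥ c` because
`a ≤ N/(16c)`. So the integrand is dominated by `2a√(2πv) e^{a²v/2}` times the `𝒩(av, v)` density
plus twice the `Exp(a)` density, which gives `E e^{zX} ≤ √(32π) √(c²z²/N) e^{2c²z²/N} + 3`.
-/

open MeasureTheory ProbabilityTheory Real Set
open scoped NNReal ENNReal

section TailExponent

variable {a c N t v : ℝ}

lemma tail_exponent_le_of_le (hc : 0 < c) (hN : 0 < N) (hv : v = 4 * c ^ 2 / N) (ht : 0 ≤ t)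
    (htc : t ≤ c) :
    a * t - N * t ^ 2 / (4 * c * (c + t)) ≤ a ^ 2 * v / 2 - (t - a * v) ^ 2 / (2 * v) := by
  have hsq : a * t - N * t ^ 2 / (8 * c ^ 2) = a ^ 2 * v / 2 - (t - a * v) ^ 2 / (2 * v) := by
    subst hv
    field_simp
    ring
  have hden : N * t ^ 2 / (8 * c ^ 2) ≤ N * t ^ 2 / (4 * c * (c + t)) :=
    div_le_div_of_nonneg_left (by positivity) (by positivity) (by nlinarith)
  linarith

lemma tail_exponent_le_of_ge (hc : 0 < c) (ha : 0 ≤ a) (haN : a ≤ N / (16 * c)) (hct : c ≤ t) :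
    a * t - N * t ^ 2 / (4 * c * (c + t)) ≤ -(a * t) := by
  have ht : 0 < t := hc.trans_le hct
  rw [le_div_iff₀ (by positivity)] at haN
  have hden : N * t / (8 * c) ≤ N * t ^ 2 / (4 * c * (c + t)) := by
    have hN : 0 ≤ N := by nlinarith
    rw [show N * t / (8 * c) = N * t ^ 2 / (8 * c * t) by field_simp]
    exact div_le_div_of_nonneg_left (by positivity) (by positivity) (by nlinarith)
  have hat : 2 * (a * t) ≤ N * t / (8 * c) := by
    rw [le_div_iff₀ (by positivity)]
    nlinarith
  linarith

lemma exp_tail_exponent_le (hc : 0 < c) (hN : 0 < N) (hv : v = 4 * c ^ 2 / N) (ha : 0 ≤ a)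
    (haN : a ≤ N / (16 * c)) (ht : 0 ≤ t) :
    exp (a * t - N * t ^ 2 / (4 * c * (c + t))) ≤
      exp (a ^ 2 * v / 2) * exp (-(t - a * v) ^ 2 / (2 * v)) + exp (-(a * t)) := by
  rcases le_total t c with htc | hct
  · have := exp_le_exp.2 (tail_exponent_le_of_le (a := a) hc hN hv ht htc)
    rw [sub_eq_add_neg (a ^ 2 * v / 2), exp_add, ← neg_div] at this
    linarith [exp_pos (-(a * t))]
  · have := exp_le_exp.2 (tail_exponent_le_of_ge hc ha haN hct)
    nlinarith [exp_pos (a ^ 2 * v / 2), exp_pos (-(t - a * v) ^ 2 / (2 * v))]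

end TailExponent

lemma lintegral_ofReal_exp_mul_eq {Ω : Type*} [MeasurableSpace Ω] (μ : Measure Ω) {Y : Ω → ℝ}
    (hY0 : 0 ≤ᵐ[μ] Y) (hY : AEMeasurable Y μ) {a : ℝ} (ha : 0 ≤ a) :
    ∫⁻ ω, ENNReal.ofReal (exp (a * Y ω)) ∂μ =
      μ univ + ∫⁻ t in Ioi 0, μ {ω | t ≤ Y ω} * ENNReal.ofReal (a * exp (a * t)) := by
  have hderiv (t : ℝ) : HasDerivAt (fun s => exp (a * s)) (a * exp (a * t)) t := by
    simpa [mul_comm] using ((hasDerivAt_id t).const_mul a).exp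
  have hcont : Continuous fun t => a * exp (a * t) := by fun_prop
  have hint (x : ℝ) : ∫ t in 0..x, a * exp (a * t) = exp (a * x) - 1 := by
    rw [intervalIntegral.integral_eq_sub_of_hasDerivAt (fun t _ => hderiv t)
      (hcont.intervalIntegrable _ _), mul_zero, exp_zero]
  have hlayer := lintegral_comp_eq_lintegral_meas_le_mul μ hY0 hY
    (fun t _ => hcont.intervalIntegrable 0 t) (ae_of_all _ fun t => by positivity)
  simp only [hint] at hlayer
  rw [← hlayer, ← lintegral_one, add_comm, ← lintegral_add_right _ measurable_const]
  refine lintegral_congr_ae (hY0.mono fun ω hω => ?_)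
  have hone : 1 ≤ exp (a * Y ω) := one_le_exp (mul_nonneg ha hω)
  dsimp only
  rw [← ENNReal.ofReal_one, ← ENNReal.ofReal_add (sub_nonneg.2 hone) zero_le_one, sub_add_cancel]

lemma tail_weight_le_gaussianPDFReal_add {a c N t : ℝ} (hc : 0 < c) (hN : 0 < N) {v : ℝ≥0}
    (hv : (v : ℝ) = 4 * c ^ 2 / N) (ha : 0 ≤ a) (haN : a ≤ N / (16 * c)) (ht : 0 ≤ t) :
    2 * exp (-(N * t ^ 2) / (4 * c * (c + t))) * (a * exp (a * t)) ≤
      2 * a * √(2 * π * v) * exp (a ^ 2 * v / 2) * gaussianPDFReal (a * v) v t +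
        2 * (a * exp (-(a * t))) := by
  have hv0 : (0 : ℝ) < v := by rw [hv]; positivity
  calc 2 * exp (-(N * t ^ 2) / (4 * c * (c + t))) * (a * exp (a * t))
      = 2 * a * exp (a * t - N * t ^ 2 / (4 * c * (c + t))) := by
        rw [sub_eq_add_neg, exp_add, neg_div]
        ring
    _ ≤ 2 * a * (exp (a ^ 2 * v / 2) * exp (-(t - a * v) ^ 2 / (2 * v)) + exp (-(a * t))) :=
        mul_le_mul_of_nonneg_left (exp_tail_exponent_le hc hN hv ha haN ht) (by positivity)
    _ = _ := by
        rw [gaussianPDFReal]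
        field_simp

lemma lintegral_meas_le_mul_exp_le {Ω : Type*} [MeasurableSpace Ω] (μ : Measure Ω) (Y : Ω → ℝ)
    {a c N : ℝ} (hc : 0 < c) (hN : 0 < N)
    (htail : ∀ t : ℝ, 0 < t →
      μ {ω | t ≤ Y ω} ≤ ENNReal.ofReal (2 * exp (-(N * t ^ 2) / (4 * c * (c + t)))))
    (ha : 0 ≤ a) (haN : a ≤ N / (16 * c)) :
    ∫⁻ t in Ioi 0, μ {ω | t ≤ Y ω} * ENNReal.ofReal (a * exp (a * t)) ≤
      ENNReal.ofReal (√(32 * π) * √(c ^ 2 * a ^ 2 / N) * exp (2 * (c ^ 2 * a ^ 2 / N))) + 2 := by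
  rcases ha.eq_or_lt with rfl | ha
  · simp
  set v : ℝ≥0 := ⟨4 * c ^ 2 / N, by positivity⟩
  have hv : (v : ℝ) = 4 * c ^ 2 / N := rfl
  have hv0 : v ≠ 0 := by
    rw [← NNReal.coe_ne_zero, hv]
    positivity
  have hC : √(32 * π) * √(c ^ 2 * a ^ 2 / N) * exp (2 * (c ^ 2 * a ^ 2 / N)) =
      2 * a * √(2 * π * v) * exp (a ^ 2 * v / 2) := by
    rw [← sqrt_mul (by positivity), show 32 * π * (c ^ 2 * a ^ 2 / N) = (2 * a) ^ 2 * (2 * π * v) by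
      rw [hv]; ring, sqrt_mul (by positivity), sqrt_sq (by positivity), hv]
    ring_nf
  rw [hC]
  set C := 2 * a * √(2 * π * v) * exp (a ^ 2 * v / 2)
  calc ∫⁻ t in Ioi 0, μ {ω | t ≤ Y ω} * ENNReal.ofReal (a * exp (a * t))
      ≤ ∫⁻ t in Ioi 0, ENNReal.ofReal C * gaussianPDF (a * v) v t + 2 * exponentialPDF a t := by
        refine setLIntegral_mono' measurableSet_Ioi fun t (ht : 0 < t) => ?_
        calc μ {ω | t ≤ Y ω} * ENNReal.ofReal (a * exp (a * t))
            ≤ ENNReal.ofReal (2 * exp (-(N * t ^ 2) / (4 * c * (c + t)))) *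
                ENNReal.ofReal (a * exp (a * t)) := by gcongr; exact htail t ht
          _ ≤ ENNReal.ofReal (C * gaussianPDFReal (a * v) v t + 2 * (a * exp (-(a * t)))) := by
            rw [← ENNReal.ofReal_mul (by positivity)]
            exact ENNReal.ofReal_le_ofReal
              (tail_weight_le_gaussianPDFReal_add hc hN hv ha.le haN ht.le)
          _ = ENNReal.ofReal C * gaussianPDF (a * v) v t + 2 * exponentialPDF a t := by
            have hCg : 0 ≤ C * gaussianPDFReal (a * v) v t :=
              mul_nonneg (by positivity) (gaussianPDFReal_nonneg _ _ _)
            rw [gaussianPDF, exponentialPDF_of_nonneg ht.le, ← ENNReal.ofReal_mul (by positivity),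
              ← ENNReal.ofReal_ofNat 2, ← ENNReal.ofReal_mul zero_le_two,
              ← ENNReal.ofReal_add hCg (by positivity)]
    _ ≤ ∫⁻ t, ENNReal.ofReal C * gaussianPDF (a * v) v t + 2 * exponentialPDF a t :=
        setLIntegral_le_lintegral _ _
    _ = ENNReal.ofReal C + 2 := by
        rw [lintegral_add_left ((measurable_gaussianPDF _ _).const_mul _),
          lintegral_const_mul' _ _ ENNReal.ofReal_ne_top,
          lintegral_const_mul' _ _ ENNReal.ofNat_ne_top, lintegral_gaussianPDF_eq_one _ hv0,
          lintegral_exponentialPDF_eq_one ha, mul_one, mul_one]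

theorem mgf_bound_from_tail_general {Ω : Type*} [MeasurableSpace Ω]
    (μ : Measure Ω) [IsProbabilityMeasure μ] (X : Ω → ℝ) (hX : Measurable X)
    (c N : ℝ) (hc : 0 < c)
    (htail : ∀ t : ℝ, 0 < t →
      μ {ω | t ≤ |X ω|} ≤ ENNReal.ofReal (2 * Real.exp (-(N * t ^ 2) / (4 * c * (c + t)))))
    (z : ℝ) (hz : |z| < N / (16 * c)) :
    ∫ ω, Real.exp (z * X ω) ∂μ ≤
      Real.sqrt (32 * Real.pi) * Real.sqrt (c ^ 2 * z ^ 2 / N) *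
          Real.exp (2 * (c ^ 2 * z ^ 2 / N))
        + 3 * Real.exp (|z| / Real.sqrt N) + 2 * Real.exp (-(N / 16)) := by
  have hN : 0 < N := by
    have := (abs_nonneg z).trans_lt hz
    rwa [div_pos_iff_of_pos_right (by positivity)] at this
  have hlayer := lintegral_ofReal_exp_mul_eq μ (ae_of_all _ fun ω => abs_nonneg (X ω))
    hX.abs.aemeasurable (abs_nonneg z)
  have htails := lintegral_meas_le_mul_exp_le μ (fun ω => |X ω|) hc hN htail (abs_nonneg z) hz.le
  rw [sq_abs] at htails
  set C := √(32 * π) * √(c ^ 2 * z ^ 2 / N) * exp (2 * (c ^ 2 * z ^ 2 / N))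
  have hC : 0 ≤ C := by positivity
  rw [integral_eq_lintegral_of_nonneg_ae (ae_of_all _ fun _ => (exp_pos _).le) (by fun_prop)]
  refine ENNReal.toReal_le_of_le_ofReal (by positivity) ?_
  calc ∫⁻ ω, ENNReal.ofReal (exp (z * X ω)) ∂μ
      ≤ ∫⁻ ω, ENNReal.ofReal (exp (|z| * |X ω|)) ∂μ := by
        refine lintegral_mono fun ω => ENNReal.ofReal_le_ofReal (exp_le_exp.2 ?_)
        exact (le_abs_self _).trans_eq (abs_mul z (X ω))
    _ ≤ 1 + (ENNReal.ofReal C + 2) := by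
        rw [hlayer, measure_univ]
        gcongr
    _ = ENNReal.ofReal (C + 3) := by
        rw [ENNReal.ofReal_add hC zero_le_three, ENNReal.ofReal_ofNat]
        ring
    _ ≤ _ := ENNReal.ofReal_le_ofReal <| by
        nlinarith [one_le_exp (by positivity : 0 ≤ |z| / √N), exp_pos (-(N / 16))]

/-- If a real random variable `X` satisfies the tail bound
`Pr{|X| ≥ t} ≤ 2 exp (-N t² / (4 c (c + t)))` for all `t > 0` (with `c > 0`, `N ≥ 1`),
then for `|z| < N / (16 c)`,
`E[e^{zX}] ≤ √(32π) √(c² z² / N) exp (2 c² z² / N) + 3 e^{|z|/√N} + 2 exp (-N/16)`. -/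
theorem mgf_bound_from_tail {Ω : Type*} [MeasurableSpace Ω]
    (μ : Measure Ω) [IsProbabilityMeasure μ] (X : Ω → ℝ) (hX : Measurable X)
    (c N : ℝ) (hc : 0 < c) (hN : 1 ≤ N)
    (htail : ∀ t : ℝ, 0 < t →
      μ {ω | t ≤ |X ω|} ≤ ENNReal.ofReal (2 * Real.exp (-(N * t ^ 2) / (4 * c * (c + t)))))
    (z : ℝ) (hz : |z| < N / (16 * c)) :
    ∫ ω, Real.exp (z * X ω) ∂μ ≤
      Real.sqrt (32 * Real.pi) * Real.sqrt (c ^ 2 * z ^ 2 / N) *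
          Real.exp (2 * (c ^ 2 * z ^ 2 / N))
        + 3 * Real.exp (|z| / Real.sqrt N) + 2 * Real.exp (-(N / 16)) :=
  mgf_bound_from_tail_general μ X hX c N hc htail z hz
end

section
/- Let y = log((1/N)∑_{k=1}^N Y_k²) with Y_k i.i.d. standard Gaussian. Then for z = (t/2)N with 0 < t ≤ 1 and all sufficiently large N, e^{-tz}·E[e^{yz}] ≤ exp(-t²N/4). -/
open MeasureTheory ProbabilityTheory
open scoped NNReal ENNReal

lemma key_log_ineq (t : ℝ) (ht : 0 ≤ t) : (1 + t) * Real.log (1 + t) ≤ t + t ^ 2 / 2 := by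
  have h1t : (0:ℝ) < 1 + t := by linarith
  set L := Real.log (1 + t) with hL
  have hL0 : 0 ≤ L := Real.log_nonneg (by linarith)
  have h1 : 1 + L + L ^ 2 / 2 ≤ Real.exp L := Real.quadratic_le_exp_of_nonneg hL0
  rw [Real.exp_log h1t] at h1
  nlinarith [sq_nonneg (t - L), sq_nonneg L, mul_nonneg hL0 (show (0:ℝ) ≤ t - L - L^2/2 by linarith)]

lemma gauss_exp_sq_aux (c : ℝ) (hc : c < 1/2) :
    Integrable (fun y : ℝ => Real.exp (c * y ^ 2)) (gaussianReal 0 1) ∧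
      ∫ y, Real.exp (c * y ^ 2) ∂(gaussianReal 0 1)
        = (Real.sqrt (2 * Real.pi))⁻¹ * Real.sqrt (Real.pi / (1/2 - c)) := by
  have hb : 0 < 1/2 - c := by linarith
  set f : ℝ → ℝ≥0 := fun x => (gaussianPDFReal 0 1 x).toNNReal with hf
  have hfm : Measurable f := (measurable_gaussianPDFReal 0 1).real_toNNReal
  have hdens : gaussianReal 0 1 = volume.withDensity (fun x => (f x : ENNReal)) := by
    rw [gaussianReal_of_var_ne_zero 0 one_ne_zero]
    congr 1
  have hpdf : ∀ x : ℝ, (f x : ℝ) = (Real.sqrt (2 * Real.pi))⁻¹ * Real.exp (-(x ^ 2) / 2) := by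
    intro x
    rw [hf]
    simp only [Real.coe_toNNReal _ (gaussianPDFReal_nonneg 0 1 x)]
    simp [gaussianPDFReal]
  have hcomb : ∀ x : ℝ, (f x : ℝ) * Real.exp (c * x ^ 2)
      = (Real.sqrt (2 * Real.pi))⁻¹ * Real.exp (-(1/2 - c) * x ^ 2) := by
    intro x
    rw [hpdf x, mul_assoc, ← Real.exp_add]
    ring_nf
  have hint : Integrable (fun x : ℝ => (f x : ℝ) * Real.exp (c * x ^ 2)) volume := by
    have := (integrable_exp_neg_mul_sq hb).const_mul (Real.sqrt (2 * Real.pi))⁻¹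
    exact this.congr (ae_of_all _ fun x => (hcomb x).symm)
  constructor
  · rw [hdens, integrable_withDensity_iff_integrable_coe_smul hfm]
    exact hint.congr (ae_of_all _ fun x => by simp [smul_eq_mul])
  · rw [hdens, integral_withDensity_eq_integral_smul hfm]
    calc ∫ x, f x • Real.exp (c * x ^ 2)
        = ∫ x, (Real.sqrt (2 * Real.pi))⁻¹ * Real.exp (-(1/2 - c) * x ^ 2) := by
          congr 1; funext x; rw [← hcomb x]; rw [NNReal.smul_def, smul_eq_mul]
      _ = (Real.sqrt (2 * Real.pi))⁻¹ * ∫ x, Real.exp (-(1/2 - c) * x ^ 2) := by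
          rw [integral_const_mul]
      _ = (Real.sqrt (2 * Real.pi))⁻¹ * Real.sqrt (Real.pi / (1/2 - c)) := by
          rw [integral_gaussian]

lemma pi_integral_pow (μ : Measure ℝ) [IsProbabilityMeasure μ] (N : ℕ) (f : ℝ → ℝ) :
    ∫ x : Fin N → ℝ, ∏ k, f (x k) ∂(Measure.pi fun _ : Fin N => μ)
      = (∫ y, f y ∂μ) ^ N := by
  letI : MeasureSpace ℝ := ⟨μ⟩
  haveI : SigmaFinite (volume : Measure ℝ) := inferInstanceAs (SigmaFinite μ)
  have h : (Measure.pi fun _ : Fin N => μ) = (volume : Measure (Fin N → ℝ)) :=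
    (MeasureTheory.volume_pi).symm
  rw [h]
  rw [← h]
  simpa using MeasureTheory.integral_fintype_prod_eq_pow (ι := Fin N) (μ := μ) f

lemma pi_integrable_prod (μ : Measure ℝ) [IsProbabilityMeasure μ] (N : ℕ) (f : ℝ → ℝ)
    (hf : Integrable f μ) :
    Integrable (fun x : Fin N → ℝ => ∏ k, f (x k)) (Measure.pi fun _ : Fin N => μ) := by
  letI : MeasureSpace ℝ := ⟨μ⟩
  haveI : SigmaFinite (volume : Measure ℝ) := inferInstanceAs (SigmaFinite μ)
  have h : (Measure.pi fun _ : Fin N => μ) = (volume : Measure (Fin N → ℝ)) :=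
    (MeasureTheory.volume_pi).symm
  rw [h]
  exact MeasureTheory.Integrable.fintype_prod (f := fun _ : Fin N => f) fun _ => hf

/-- Let `y = log((1/N) ∑_{k<N} Y_k²)` with `Y_k` i.i.d. standard Gaussian.
For `z = (t/2) N` with `0 < t ≤ 1` and all sufficiently large `N`,
`e^{-tz} E[e^{yz}] ≤ exp (-t² N / 4)`. -/
theorem chiSq_log_mgf_bound (t : ℝ) (ht : 0 < t) (ht1 : t ≤ 1) :
    ∃ N₀ : ℕ, ∀ N : ℕ, N₀ ≤ N →
      Real.exp (-(t * (t / 2 * N))) *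
          ∫ x : Fin N → ℝ,
            Real.exp ((t / 2 * N) * Real.log ((1 / N : ℝ) * ∑ k, (x k) ^ 2))
            ∂(Measure.pi fun _ : Fin N => gaussianReal 0 1)
        ≤ Real.exp (-(t ^ 2 * N / 4)) := by
  refine ⟨1, fun N hN => ?_⟩
  have hNpos : 0 < N := hN
  have hNR : (0:ℝ) < (N:ℝ) := by exact_mod_cast hNpos
  have h1t : (0:ℝ) < 1 + t := by linarith
  set c : ℝ := t / (2 * (1 + t)) with hc_def
  have hc : c < 1/2 := by
    rw [hc_def, div_lt_iff₀ (by linarith)]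
    linarith
  set z : ℝ := t / 2 * N with hz_def
  have hz0 : 0 ≤ z := by positivity
  set L : ℝ := Real.log (1 + t) with hL_def
  obtain ⟨hint1, hval⟩ := gauss_exp_sq_aux c hc
  -- value of the one-dimensional integral
  have hhalf : 1/2 - c = 1/(2*(1+t)) := by
    rw [hc_def]; field_simp
    ring
  have hval' : ∫ y, Real.exp (c * y ^ 2) ∂(gaussianReal 0 1) = Real.sqrt (1 + t) := by
    rw [hval, hhalf]
    have h2pi : (0:ℝ) < 2 * Real.pi := by positivity
    have : Real.pi / (1/(2*(1+t))) = (2 * Real.pi) * (1 + t) := by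
      field_simp
    rw [this, Real.sqrt_mul h2pi.le, ← mul_assoc, inv_mul_cancel₀ (by positivity), one_mul]
  set π₀ : Measure (Fin N → ℝ) := Measure.pi fun _ : Fin N => gaussianReal 0 1 with hπ₀
  set A : ℝ := Real.exp (z * L - z) with hA_def
  -- integrability of the dominating function
  have hg_int : Integrable (fun x : Fin N → ℝ =>
      A * ∏ k, Real.exp (c * (x k) ^ 2)) π₀ :=
    (pi_integrable_prod (gaussianReal 0 1) N _ hint1).const_mul A
  -- a.e. pointwise bound
  haveI : NullSingletonClass (gaussianReal 0 1) :=
    ⟨fun a => gaussianReal_absolutelyContinuous 0 one_ne_zero (measure_singleton a)⟩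
  have hae : ∀ᵐ x ∂π₀,
      Real.exp (z * Real.log ((1 / N : ℝ) * ∑ k, (x k) ^ 2))
        ≤ A * ∏ k, Real.exp (c * (x k) ^ 2) := by
    have h0 : ∀ᵐ x ∂π₀, x ⟨0, hNpos⟩ ≠ (0:ℝ) :=
      MeasureTheory.Measure.ae_eval_ne (μ := fun _ : Fin N => gaussianReal 0 1) (⟨0, hNpos⟩ : Fin N) 0
    filter_upwards [h0] with x hx0
    set S : ℝ := ∑ k, (x k) ^ 2 with hS_def
    have hSpos : 0 < S := by
      have h1 : (x ⟨0, hNpos⟩) ^ 2 ≤ S :=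
        Finset.single_le_sum (fun k _ => sq_nonneg (x k)) (Finset.mem_univ _)
      have h2 : (0:ℝ) < (x ⟨0, hNpos⟩) ^ 2 :=
        lt_of_le_of_ne (sq_nonneg _) (Ne.symm (pow_ne_zero 2 hx0))
      linarith
    have hs : (0:ℝ) < (1 / N : ℝ) * S := by positivity
    have hprod : (∏ k, Real.exp (c * (x k) ^ 2)) = Real.exp (c * S) := by
      rw [← Real.exp_sum, hS_def, Finset.mul_sum]
    rw [hprod, hA_def, ← Real.exp_add, Real.exp_le_exp]
    -- z * log s ≤ z * L - z + c * S
    have hlog : Real.log (((1 / N : ℝ) * S) / (1 + t)) ≤ ((1 / N : ℝ) * S) / (1 + t) - 1 :=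
      Real.log_le_sub_one_of_pos (div_pos hs h1t)
    have hsplit : Real.log ((1 / N : ℝ) * S)
        = L + Real.log (((1 / N : ℝ) * S) / (1 + t)) := by
      rw [Real.log_div hs.ne' h1t.ne', hL_def]; ring
    have hmul := mul_le_mul_of_nonneg_left hlog hz0
    have hzs : z * (((1 / N : ℝ) * S) / (1 + t)) = c * S := by
      rw [hz_def, hc_def]
      field_simp
    rw [hsplit]
    nlinarith [hmul, hzs]
  -- bound the integral
  have hmono : (∫ x, Real.exp (z * Real.log ((1 / N : ℝ) * ∑ k, (x k) ^ 2)) ∂π₀)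
      ≤ ∫ x, A * ∏ k, Real.exp (c * (x k) ^ 2) ∂π₀ :=
    integral_mono_of_nonneg (ae_of_all _ fun x => (Real.exp_pos _).le) hg_int hae
  have hval2 : (∫ x, A * ∏ k, Real.exp (c * (x k) ^ 2) ∂π₀)
      = A * (Real.sqrt (1 + t)) ^ N := by
    rw [integral_const_mul, pi_integral_pow (gaussianReal 0 1) N (fun y => Real.exp (c * y ^ 2)), hval']
  -- express sqrt power as exp
  have hsqrt : (Real.sqrt (1 + t)) ^ N = Real.exp ((N : ℝ) * (L / 2)) := by
    have h1 : Real.sqrt (1 + t) = Real.exp (L / 2) := by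
      rw [← Real.exp_log (Real.sqrt_pos.2 h1t), Real.log_sqrt h1t.le, hL_def]
    rw [h1, ← Real.exp_nat_mul]
  calc Real.exp (-(t * z)) *
        ∫ x, Real.exp (z * Real.log ((1 / N : ℝ) * ∑ k, (x k) ^ 2)) ∂π₀
      ≤ Real.exp (-(t * z)) * (A * (Real.sqrt (1 + t)) ^ N) := by
        apply mul_le_mul_of_nonneg_left _ (Real.exp_pos _).le
        rw [← hval2]; exact hmono
    _ = Real.exp (-(t * z) + (z * L - z) + (N : ℝ) * (L / 2)) := by
        rw [hsqrt, hA_def, ← Real.exp_add, ← Real.exp_add]; ring_nf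
    _ ≤ Real.exp (-(t ^ 2 * N / 4)) := by
        rw [Real.exp_le_exp]
        have hkey := key_log_ineq t ht.le
        have hmul := mul_le_mul_of_nonneg_right hkey (show (0:ℝ) ≤ (N:ℝ)/2 by positivity)
        rw [hz_def, hL_def] at *
        nlinarith [hmul]
end

section
/- Let s_1,...,s_N be nonnegative reals, set α_l = (1/(2l))∑_{i=1}^N s_i^l, and define β_k by the formal power series identity 1 + ∑_{k≥1} β_k z^k = exp(∑_{l≥1} α_l z^l). Let u be uniformly distributed on the unit sphere of R^N and x = ∑_{k=1}^N s_k u_k². Then for every positive integer k, E[x^k] = 2^k k! β_k / (N(N+2)···(N+2k-2)). -/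
/-!
Integrate `Q(x)^k e^{-‖x‖²/2}`, where `Q(x) = ∑ sᵢ xᵢ²`, over `ℝ^N` in two ways. In polar
coordinates it is the sphere integral of `Q^k` times `∫₀^∞ r^{N-1+2k} e^{-r²/2} dr`, and the radial
factor is `N(N+2)⋯(N+2k-2)` times its value at `k = 0`. In Cartesian coordinates the Gaussian
factorizes; by the multinomial theorem and `∫ x^{2m} e^{-x²/2} = (2m-1)‼ ∫ e^{-x²/2}` it is
`k! (∫ e^{-x²/2})^N` times the `k`-th coefficient of `∏ᵢ (1 - 2 sᵢ z)^{-1/2}`. The logarithmic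
derivative of this product is `∑ᵢ sᵢ / (1 - 2 sᵢ z)`, that of `exp (∑ α_l (2z)^l)`, so the
coefficient is `2^k β_k`.
Dividing by the case `k = 0` normalizes the sphere measure.
-/

open MeasureTheory

open Real Set Finset PowerSeries Metric
open scoped Nat

namespace PowerSeries

variable {R : Type*}

theorem coeff_prod_eq_sum_piAntidiag [CommSemiring R] {ι : Type*} [DecidableEq ι]
    (f : ι → R⟦X⟧) (d : ℕ) (s : Finset ι) :
    coeff d (∏ i ∈ s, f i) = ∑ l ∈ piAntidiag s d, ∏ i ∈ s, coeff (l i) (f i) := by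
  rw [coeff_prod, finsuppAntidiag, sum_map]
  exact sum_attach (piAntidiag s d) fun l => ∏ i ∈ s, coeff (l i) (f i)

theorem derivative_rescale [CommSemiring R] (a : R) (f : R⟦X⟧) :
    d⁄dX R (rescale a f) = C a * rescale a (d⁄dX R f) := by
  ext n
  simp only [coeff_derivative, coeff_rescale, coeff_C_mul]
  ring

theorem derivative_prod_of_derivative_eq_mul [CommSemiring R] {ι : Type*} (s : Finset ι)
    {Q F : ι → R⟦X⟧} (h : ∀ i ∈ s, d⁄dX R (F i) = Q i * F i) :
    d⁄dX R (∏ i ∈ s, F i) = (∑ i ∈ s, Q i) * ∏ i ∈ s, F i := by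
  classical
  induction s using Finset.induction_on with
  | empty => simp
  | insert a s ha ih =>
    rw [prod_insert ha, sum_insert ha, Derivation.leibniz, smul_eq_mul, smul_eq_mul,
      h a (mem_insert_self a s), ih fun i hi => h i (mem_insert_of_mem hi)]
    ring

theorem eq_zero_of_derivative_eq_mul [CommRing R] [IsDomain R] [CharZero R] {Q H : R⟦X⟧}
    (hH : d⁄dX R H = Q * H) (h0 : constantCoeff H = 0) : H = 0 := by
  ext n
  induction n using Nat.strong_induction_on with
  | _ n ih =>
    cases n with
    | zero => simpa using h0
    | succ n =>
      have hn := congrArg (coeff n) hH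
      rw [coeff_derivative, coeff_mul, sum_eq_zero fun p hp => ?_] at hn
      · simpa [Nat.cast_add_one_ne_zero] using hn
      · rw [ih p.2 (by have := mem_antidiagonal.1 hp; omega), map_zero, mul_zero]

theorem eq_of_derivative_eq_mul [CommRing R] [IsDomain R] [CharZero R] {Q F G : R⟦X⟧}
    (hF : d⁄dX R F = Q * F) (hG : d⁄dX R G = Q * G) (h0 : constantCoeff F = constantCoeff G) :
    F = G :=
  sub_eq_zero.1 <| eq_zero_of_derivative_eq_mul (Q := Q)
    (by rw [map_sub, hF, hG, mul_sub]) (by rw [map_sub, h0, sub_self])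

end PowerSeries

theorem Nat.doubleFactorial_two_mul_succ_sub_one (m : ℕ) :
    (2 * (m + 1) - 1)‼ = (2 * m + 1) * (2 * m - 1)‼ := by
  rw [show 2 * (m + 1) - 1 = 2 * m + 1 by omega, Nat.doubleFactorial_add_one]

/-- `E[exp (z c Z²)] = (1 - 2cz)^{-1/2}` for a standard normal `Z`, expanded in `z`. -/
noncomputable def chiSqMGF (c : ℝ) : ℝ⟦X⟧ := mk fun m => c ^ m * (2 * m - 1)‼ / m !

theorem one_sub_mul_derivative_chiSqMGF (c : ℝ) :
    (1 - C (2 * c) * X) * d⁄dX ℝ (chiSqMGF c) = C c * chiSqMGF c := by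
  ext n
  rcases n with _ | n <;>
    simp only [sub_mul, one_mul, mul_assoc, map_sub, coeff_C_mul, coeff_zero_X_mul,
      coeff_succ_X_mul, coeff_derivative, chiSqMGF, coeff_mk]
  · simp
  · rw [Nat.doubleFactorial_two_mul_succ_sub_one, Nat.factorial_succ]
    push_cast
    field_simp
    ring

theorem derivative_chiSqMGF (c : ℝ) :
    d⁄dX ℝ (chiSqMGF c) = (C c * rescale (2 * c) (mk 1)) * chiSqMGF c := by
  have hgeom : C c * rescale (2 * c) (mk 1) * (1 - C (2 * c) * X) = C c := by
    rw [mul_assoc, ← rescale_X, ← map_one (rescale (2 * c)), ← map_sub, ← map_mul,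
      mk_one_mul_one_sub_eq_one, map_one, mul_one]
  have hunit : (1 - C (2 * c) * X : ℝ⟦X⟧) ≠ 0 := fun h => by
    simpa using congrArg constantCoeff h
  refine mul_left_cancel₀ hunit ?_
  rw [one_sub_mul_derivative_chiSqMGF, ← mul_assoc, mul_comm (1 - _), hgeom]

theorem prod_chiSqMGF_eq_rescale {ι : Type*} [Fintype ι] (s : ι → ℝ) (α : ℕ → ℝ)
    (hα : ∀ l : ℕ, 1 ≤ l → α l = (1 / (2 * l) : ℝ) * ∑ i, s i ^ l) (β : ℕ → ℝ) (hβ0 : β 0 = 1)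
    (hβ : d⁄dX ℝ (mk β) = d⁄dX ℝ (mk fun l => if l = 0 then 0 else α l) * mk β) :
    ∏ i, chiSqMGF (s i) = rescale 2 (mk β) := by
  set Q : ℝ⟦X⟧ := ∑ i, C (s i) * rescale (2 * s i) (mk 1)
  have hQ : C (2 : ℝ) * rescale (2 : ℝ) (d⁄dX ℝ (mk fun l => if l = 0 then 0 else α l)) = Q := by
    ext l
    simp only [Q, coeff_C_mul, coeff_rescale, coeff_derivative, coeff_mk, map_sum,
      if_neg l.succ_ne_zero, hα (l + 1) l.succ_pos, mul_pow, Pi.one_apply, mul_one, sum_mul,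
      mul_sum]
    refine Finset.sum_congr rfl fun i _ => ?_
    push_cast
    field_simp
    ring
  refine eq_of_derivative_eq_mul (Q := Q)
    (derivative_prod_of_derivative_eq_mul _ fun i _ => derivative_chiSqMGF (s i)) ?_ ?_
  · rw [derivative_rescale, hβ, map_mul, ← mul_assoc, hQ]
  · rw [map_prod, ← coeff_zero_eq_constantCoeff_apply, coeff_rescale, coeff_mk, hβ0]
    simp [chiSqMGF]

noncomputable def gaussHalfMoment (n : ℕ) : ℝ := ∫ r in Ioi (0 : ℝ), r ^ n * exp (-r ^ 2 / 2)

theorem gaussHalfMoment_eq_Gamma (n : ℕ) :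
    gaussHalfMoment n =
      (1 / 2 : ℝ) ^ (-((n : ℝ) + 1) / 2) * (1 / 2) * Gamma (((n : ℝ) + 1) / 2) := by
  rw [gaussHalfMoment, ← integral_rpow_mul_exp_neg_mul_rpow two_pos
    (neg_one_lt_zero.trans_le n.cast_nonneg) one_half_pos]
  refine setIntegral_congr_fun measurableSet_Ioi fun x _ => ?_
  rw [rpow_natCast, rpow_two]
  ring_nf

theorem gaussHalfMoment_pos (n : ℕ) : 0 < gaussHalfMoment n := by
  rw [gaussHalfMoment_eq_Gamma]
  have := Gamma_pos_of_pos (s := ((n : ℝ) + 1) / 2) (by positivity)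
  positivity

theorem gaussHalfMoment_add_two (n : ℕ) :
    gaussHalfMoment (n + 2) = (n + 1) * gaussHalfMoment n := by
  rw [gaussHalfMoment_eq_Gamma, gaussHalfMoment_eq_Gamma]
  push_cast
  rw [show ((n : ℝ) + 2 + 1) / 2 = ((n : ℝ) + 1) / 2 + 1 by ring, Gamma_add_one (by positivity),
    show -((n : ℝ) + 2 + 1) / 2 = -((n : ℝ) + 1) / 2 + -1 by ring,
    rpow_add one_half_pos, rpow_neg_one]
  ring

theorem gaussHalfMoment_add_two_mul (n k : ℕ) :
    gaussHalfMoment (n + 2 * k) =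
      (∏ j ∈ range k, ((n : ℝ) + 1 + 2 * j)) * gaussHalfMoment n := by
  induction k with
  | zero => simp
  | succ k ih =>
    rw [show n + 2 * (k + 1) = n + 2 * k + 2 by ring, gaussHalfMoment_add_two, ih, prod_range_succ]
    push_cast
    ring

theorem integrable_pow_mul_gaussian (n : ℕ) :
    Integrable fun x : ℝ => x ^ n * exp (-x ^ 2 / 2) := by
  refine (integrable_rpow_mul_exp_neg_mul_sq one_half_pos
    (neg_one_lt_zero.trans_le n.cast_nonneg)).congr (Filter.Eventually.of_forall fun x => ?_)
  simp only [rpow_natCast]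
  ring_nf

theorem gaussHalfMoment_two_mul (m : ℕ) :
    gaussHalfMoment (2 * m) = (2 * m - 1)‼ * gaussHalfMoment 0 := by
  induction m with
  | zero => simp
  | succ m ih =>
    rw [Nat.doubleFactorial_two_mul_succ_sub_one, show 2 * (m + 1) = 2 * m + 2 by ring,
      gaussHalfMoment_add_two, ih]
    push_cast
    ring

theorem integral_pow_two_mul_mul_gaussian (m : ℕ) :
    ∫ x : ℝ, x ^ (2 * m) * exp (-x ^ 2 / 2) = (2 * m - 1)‼ * ∫ x : ℝ, exp (-x ^ 2 / 2) := by
  have h_abs : ∀ m : ℕ, ∫ x : ℝ, x ^ (2 * m) * exp (-x ^ 2 / 2) = 2 * gaussHalfMoment (2 * m) :=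
    fun m => by
      rw [gaussHalfMoment, ← integral_comp_abs (f := fun x => x ^ (2 * m) * exp (-x ^ 2 / 2))]
      simp only [pow_mul, sq_abs]
  have h0 : ∫ x : ℝ, exp (-x ^ 2 / 2) = 2 * gaussHalfMoment 0 := by simpa using h_abs 0
  rw [h_abs, h0, gaussHalfMoment_two_mul]
  ring

theorem integral_sum_mul_sq_pow_mul_gaussian {ι : Type*} [Fintype ι] (s : ι → ℝ) (k : ℕ) :
    ∫ y : ι → ℝ, (∑ i, s i * y i ^ 2) ^ k * exp (-(∑ i, y i ^ 2) / 2) =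
      k ! * coeff k (∏ i, chiSqMGF (s i)) * (∫ x : ℝ, exp (-x ^ 2 / 2)) ^ Fintype.card ι := by
  classical
  have hexpand : ∀ y : ι → ℝ, (∑ i, s i * y i ^ 2) ^ k * exp (-(∑ i, y i ^ 2) / 2) =
      ∑ m ∈ piAntidiag univ k, (Nat.multinomial univ m * ∏ i, s i ^ m i) *
        ∏ i, (y i ^ (2 * m i) * exp (-y i ^ 2 / 2)) := fun y => by
    rw [← sum_neg_distrib, sum_div, exp_sum, sum_pow_eq_sum_piAntidiag, sum_mul]
    refine sum_congr rfl fun m _ => ?_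
    simp only [mul_pow, ← pow_mul, prod_mul_distrib]
    ring
  have hmultinomial : ∀ m ∈ piAntidiag (univ : Finset ι) k,
      (Nat.multinomial univ m : ℝ) * ∏ i, ((m i)! : ℝ) = k ! := fun m hm => by
    rw [mem_piAntidiag] at hm
    rw [← hm.1]
    exact_mod_cast (mul_comm _ _).trans (Nat.multinomial_spec univ m)
  simp_rw [hexpand]
  rw [integral_finsetSum _ fun m _ => (Integrable.fintype_prod
      fun i => integrable_pow_mul_gaussian (2 * m i)).const_mul _,
    coeff_prod_eq_sum_piAntidiag, mul_sum, sum_mul]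
  refine sum_congr rfl fun m hm => ?_
  rw [integral_const_mul, integral_fintype_prod_volume_eq_prod
    (fun i (x : ℝ) => x ^ (2 * m i) * exp (-x ^ 2 / 2))]
  simp only [integral_pow_two_mul_mul_gaussian, chiSqMGF, coeff_mk]
  rw [← hmultinomial m hm, prod_div_distrib, prod_mul_distrib, prod_mul_distrib, prod_const,
    card_univ]
  have : ∏ i, ((m i)! : ℝ) ≠ 0 := prod_ne_zero_iff.2 fun i _ => by positivity
  field_simp

theorem MeasureTheory.Measure.integral_volumeIoiPow (n : ℕ) (f : ℝ → ℝ) :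
    ∫ r : Ioi (0 : ℝ), f r ∂(Measure.volumeIoiPow n) = ∫ r in Ioi (0 : ℝ), r ^ n * f r := by
  rw [Measure.volumeIoiPow, integral_withDensity_eq_integral_toReal_smul (by fun_prop)
      (ae_of_all _ fun _ => ENNReal.ofReal_lt_top),
    integral_subtype_comap measurableSet_Ioi fun r => (ENNReal.ofReal (r ^ n)).toReal • f r]
  refine setIntegral_congr_fun measurableSet_Ioi fun r hr => ?_
  rw [ENNReal.toReal_ofReal (pow_nonneg (le_of_lt hr) n), smul_eq_mul]

theorem integral_mul_fun_norm_of_homogeneous {E : Type*} [NormedAddCommGroup E] [NormedSpace ℝ E]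
    [FiniteDimensional ℝ E] [MeasurableSpace E] [BorelSpace E] [Nontrivial E] (μ : Measure E)
    [μ.IsAddHaarMeasure] {g : E → ℝ} {d : ℕ}
    (hg : ∀ x : E, ∀ r : ℝ, 0 < r → g (r • x) = r ^ d * g x) (f : ℝ → ℝ) :
    ∫ x, g x * f ‖x‖ ∂μ =
      (∫ u, g u ∂μ.toSphere) * ∫ r in Ioi (0 : ℝ), r ^ (Module.finrank ℝ E - 1 + d) * f r :=
  calc ∫ x, g x * f ‖x‖ ∂μ = ∫ x : ({0}ᶜ : Set E), g x * f ‖(x : E)‖ ∂(μ.comap (↑)) := by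
        rw [integral_subtype_comap (measurableSet_singleton _).compl fun x => g x * f ‖x‖,
          restrict_compl_singleton]
    _ = ∫ p : sphere (0 : E) 1 × Ioi (0 : ℝ), g p.1 * ((p.2 : ℝ) ^ d * f p.2)
          ∂(μ.toSphere.prod (.volumeIoiPow (Module.finrank ℝ E - 1))) := by
        rw [← μ.measurePreserving_homeomorphUnitSphereProd.integral_comp
          (Homeomorph.measurableEmbedding _)]
        congr 1 with ⟨x, hx⟩
        have hx : 0 < ‖x‖ := norm_pos_iff.2 hx
        simp only [homeomorphUnitSphereProd_apply_fst_coe, homeomorphUnitSphereProd_apply_snd_coe]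
        rw [mul_left_comm, ← mul_assoc, ← hg _ _ hx, smul_inv_smul₀ hx.ne']
    _ = (∫ u, g u ∂μ.toSphere) *
          ∫ r : Ioi (0 : ℝ), (r : ℝ) ^ d * f r ∂(.volumeIoiPow (Module.finrank ℝ E - 1)) :=
        integral_prod_mul (fun u : sphere (0 : E) 1 => g u) fun r : Ioi (0 : ℝ) => (r : ℝ) ^ d * f r
    _ = _ := by
        rw [Measure.integral_volumeIoiPow _ fun r => r ^ d * f r]
        simp only [← mul_assoc, ← pow_add]

theorem integral_toSphere_sum_mul_sq_pow_mul {ι : Type*} [Fintype ι] [Nonempty ι] (s : ι → ℝ)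
    (k : ℕ) :
    (∫ u : sphere (0 : EuclideanSpace ℝ ι) 1, (∑ i, s i * (u : EuclideanSpace ℝ ι) i ^ 2) ^ k
        ∂volume.toSphere) *
      ((∏ j ∈ range k, ((Fintype.card ι : ℝ) + 2 * j)) * gaussHalfMoment (Fintype.card ι - 1)) =
      k ! * coeff k (∏ i, chiSqMGF (s i)) * (∫ x : ℝ, exp (-x ^ 2 / 2)) ^ Fintype.card ι := by
  have hhom : ∀ (x : EuclideanSpace ℝ ι) (r : ℝ), 0 < r →
      (∑ i, s i * (r • x) i ^ 2) ^ k = r ^ (2 * k) * (∑ i, s i * x i ^ 2) ^ k := fun x r _ => by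
    simp only [PiLp.smul_apply, smul_eq_mul, mul_pow, mul_left_comm _ (r ^ 2), ← mul_sum, pow_mul]
  have hcard : ((Fintype.card ι - 1 : ℕ) : ℝ) + 1 = Fintype.card ι := by
    rw [← Nat.cast_add_one, Nat.sub_add_cancel Fintype.card_pos]
  calc _ = ∫ x : EuclideanSpace ℝ ι, (∑ i, s i * x i ^ 2) ^ k * exp (-‖x‖ ^ 2 / 2) := by
        rw [integral_mul_fun_norm_of_homogeneous volume hhom fun r => exp (-r ^ 2 / 2),
          finrank_euclideanSpace, ← gaussHalfMoment, gaussHalfMoment_add_two_mul, hcard]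
    _ = ∫ y : ι → ℝ, (∑ i, s i * y i ^ 2) ^ k * exp (-(∑ i, y i ^ 2) / 2) := by
        rw [← (EuclideanSpace.volume_preserving_symm_measurableEquiv_toLp ι).integral_comp']
        simp [EuclideanSpace.real_norm_sq_eq]
    _ = _ := integral_sum_mul_sq_pow_mul_gaussian s k

theorem vonNeumann_moment_formula_general (N : ℕ) (hN : 0 < N) (s : Fin N → ℝ)
    (α : ℕ → ℝ) (hα : ∀ l : ℕ, 1 ≤ l → α l = (1 / (2 * l) : ℝ) * ∑ i, (s i) ^ l)
    (β : ℕ → ℝ) (hβ0 : β 0 = 1)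
    (hβ : (PowerSeries.mk β : PowerSeries ℝ).derivativeFun =
      (PowerSeries.mk fun l => if l = 0 then (0 : ℝ) else α l).derivativeFun *
        PowerSeries.mk β)
    (k : ℕ) :
    ∫ u, (∑ j, s j * ((u : EuclideanSpace ℝ (Fin N)) j) ^ 2) ^ k ∂(sphereUniform N)
      = 2 ^ k * (k.factorial : ℝ) * β k / ∏ j ∈ Finset.range k, ((N : ℝ) + 2 * j) := by
  have : Nonempty (Fin N) := ⟨⟨0, hN⟩⟩
  have hcoeff : ∀ j, coeff j (∏ i, chiSqMGF (s i)) = 2 ^ j * β j := fun j => by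
    rw [prod_chiSqMGF_eq_rescale s α hα β hβ0 hβ, coeff_rescale, coeff_mk]
  have hmoment := integral_toSphere_sum_mul_sq_pow_mul s k
  have hmass := integral_toSphere_sum_mul_sq_pow_mul s 0
  simp only [Fintype.card_fin, hcoeff] at hmoment hmass
  simp only [pow_zero, integral_const, smul_eq_mul, mul_one, prod_range_zero, one_mul,
    Nat.factorial_zero, Nat.cast_one, hβ0, measureReal_def] at hmass
  have hσ : 0 < (volume.toSphere (univ : Set (sphere (0 : EuclideanSpace ℝ (Fin N)) 1))).toReal :=
    ENNReal.toReal_pos (Measure.measure_univ_ne_zero.2 (Measure.toSphere_ne_zero _))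
      (measure_ne_top _ _)
  have hP : 0 < ∏ j ∈ range k, ((N : ℝ) + 2 * j) := prod_pos fun j _ => by positivity
  rw [sphereUniform, integral_smul_measure, ENNReal.toReal_inv, smul_eq_mul, inv_mul_eq_div,
    div_eq_div_iff hσ.ne' hP.ne']
  refine mul_right_cancel₀ (gaussHalfMoment_pos (N - 1)).ne' ?_
  rw [← hmass] at hmoment
  linear_combination hmoment

/-- von Neumann's moment formula: with `α_l = (1/(2l)) ∑ s_i^l` and `β_k`
defined by the formal power series identity `1 + ∑ β_k z^k = exp (∑_{l ≥ 1} α_l z^l)`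
(expressed via `β 0 = 1` and the equivalent derivative identity `B' = A' B`), for `u`
uniform on the unit sphere of `ℝ^N` and `x = ∑ s_k u_k²`,
`E[x^k] = 2^k k! β_k / (N (N+2) ⋯ (N+2k-2))`. -/
theorem vonNeumann_moment_formula (N : ℕ) (hN : 0 < N) (s : Fin N → ℝ) (hs : ∀ k, 0 ≤ s k)
    (α : ℕ → ℝ) (hα : ∀ l : ℕ, 1 ≤ l → α l = (1 / (2 * l) : ℝ) * ∑ i, (s i) ^ l)
    (β : ℕ → ℝ) (hβ0 : β 0 = 1)
    (hβ : (PowerSeries.mk β : PowerSeries ℝ).derivativeFun =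
      (PowerSeries.mk fun l => if l = 0 then (0 : ℝ) else α l).derivativeFun *
        PowerSeries.mk β)
    (k : ℕ) (hk : 1 ≤ k) :
    ∫ u, (∑ j, s j * ((u : EuclideanSpace ℝ (Fin N)) j) ^ 2) ^ k ∂(sphereUniform N)
      = 2 ^ k * (k.factorial : ℝ) * β k / ∏ j ∈ Finset.range k, ((N : ℝ) + 2 * j) :=
  vonNeumann_moment_formula_general N hN s α hα β hβ0 hβ k
end
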